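/- arXiv:2308.11363 — 3 statements merged into one kernel-verified Lean document; each statement's English description precedes it below -/
import Mathlib

section
/- Let f : [0,∞) → [0,∞) be measurable, set f_0 := f, and for n ≥ 1 define the n-fold repeated tail f_n(x) := ∫_x^∞ ∫_{s_1}^∞ … ∫_{s_{n-1}}^∞ f(s_n) ds_n … ds_2 ds_1. Then for every n ≥ 1 and every q ≥ 0, with both sides valued in [0,∞] (in the extended sense ∞ = ∞), ∫_0^∞ e^{−qx} f_n(x) dx = (1/(n−1)!) ∫_0^1 (1−v)^{n−1} ( ∫_0^∞ t^n e^{−qvt} f(t) dt ) dv; equivalently, writing f̂ for the Laplace transform of f and using that its n-th derivative is f̂^{(n)}(x) = (−1)^n ∫_0^∞ t^n e^{−xt} f(t) dt, one has f̂_n(q) = ((−1)^n/(n−1)!) ∫_0^1 f̂^{(n)}(qv)(1−v)^{n−1} dv. -/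
open MeasureTheory Set Real
open scoped ENNReal

/-- The `n`-fold repeated tail of `f`: `repeatedTail f 0 = f` and
`repeatedTail f (n+1) x = ∫_x^∞ repeatedTail f n (s) ds`. -/
noncomputable def repeatedTail (f : ℝ → ℝ≥0∞) : ℕ → ℝ → ℝ≥0∞
  | 0 => f
  | n + 1 => fun x => ∫⁻ s in Set.Ioi x, repeatedTail f n s

/-!
Cauchy's formula for repeated integration gives `f_{m+1}(x) = ∫_x^∞ (t - x)^m / m! f(t) dt`.
By Tonelli on the triangle `0 < x < t`, the Laplace transform of `f_{m+1}` becomes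
`∫_0^∞ K(t) f(t) dt` with `K(t) = ∫_0^t e^{-qx} (t - x)^m / m! dx`, and the substitution `x = t v`
turns `K(t)` into `(1/m!) ∫_0^1 (1 - v)^m t^{m+1} e^{-qvt} dv`. A second use of Tonelli gives
the right-hand side.
-/

lemma setLIntegral_Ioi_setLIntegral_Ioi_swap {g : ℝ → ℝ → ℝ≥0∞}
    (hg : Measurable (Function.uncurry g)) (a : ℝ) :
    ∫⁻ x in Ioi a, ∫⁻ t in Ioi x, g x t = ∫⁻ t in Ioi a, ∫⁻ x in Ioo a t, g x t := by
  set h : ℝ → ℝ → ℝ≥0∞ := fun x t => (Ioi x).indicator (g x) t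
  have hh : Measurable (Function.uncurry h) := by
    convert hg.indicator (measurableSet_lt measurable_fst measurable_snd) using 1
    ext ⟨x, t⟩
    simp [h, indicator_apply]
  have inner_t : ∀ x ∈ Ioi a, ∫⁻ t in Ioi a, h x t = ∫⁻ t in Ioi x, g x t := by
    intro x hx
    rw [lintegral_indicator measurableSet_Ioi, Measure.restrict_restrict measurableSet_Ioi,
      Ioi_inter_Ioi, sup_eq_left.2 (le_of_lt hx)]
  have inner_x : ∀ t, ∫⁻ x in Ioi a, h x t = ∫⁻ x in Ioo a t, g x t := by
    intro t
    have : ∀ x, h x t = (Iio t).indicator (fun x => g x t) x := by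
      intro x; simp [h, indicator_apply]
    simp_rw [this]
    rw [lintegral_indicator measurableSet_Iio, Measure.restrict_restrict measurableSet_Iio,
      inter_comm, Ioi_inter_Iio]
  calc ∫⁻ x in Ioi a, ∫⁻ t in Ioi x, g x t
      = ∫⁻ x in Ioi a, ∫⁻ t in Ioi a, h x t :=
        (setLIntegral_congr_fun measurableSet_Ioi inner_t).symm
    _ = ∫⁻ t in Ioi a, ∫⁻ x in Ioi a, h x t := lintegral_lintegral_swap hh.aemeasurable
    _ = ∫⁻ t in Ioi a, ∫⁻ x in Ioo a t, g x t := by simp_rw [inner_x]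

lemma setLIntegral_Ioo_mul_left {t : ℝ} (ht : 0 < t) (a b : ℝ) (g : ℝ → ℝ≥0∞) :
    ∫⁻ x in Ioo (t * a) (t * b), g x = ∫⁻ v in Ioo a b, ENNReal.ofReal t * g (t * v) := by
  have := lintegral_image_eq_lintegral_abs_deriv_mul (s := Ioo a b) measurableSet_Ioo
    (fun v _ => ((hasDerivAt_id v).const_mul t).hasDerivWithinAt)
    (mul_right_injective₀ ht.ne').injOn g
  simpa [image_mul_left_Ioo ht, abs_of_pos ht] using this

lemma lintegral_mul_lintegral_mul_swap {α β : Type*} [MeasurableSpace α] [MeasurableSpace β]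
    {μ : Measure α} {ν : Measure β} [SFinite μ] [SFinite ν] {c : α → ℝ≥0∞}
    {k : α → β → ℝ≥0∞} {f : β → ℝ≥0∞} (hc : Measurable c) (hk : Measurable (Function.uncurry k))
    (hf : Measurable f) :
    ∫⁻ v, c v * ∫⁻ t, k v t * f t ∂ν ∂μ = ∫⁻ t, (∫⁻ v, c v * k v t ∂μ) * f t ∂ν := by
  calc ∫⁻ v, c v * ∫⁻ t, k v t * f t ∂ν ∂μ
      = ∫⁻ v, ∫⁻ t, c v * (k v t * f t) ∂ν ∂μ := by
        refine lintegral_congr fun v => (lintegral_const_mul _ ?_).symm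
        exact hk.of_uncurry_left.mul hf
    _ = ∫⁻ t, ∫⁻ v, c v * (k v t * f t) ∂μ ∂ν :=
        lintegral_lintegral_swap ((hc.comp measurable_fst).mul
          (hk.mul (hf.comp measurable_snd))).aemeasurable
    _ = ∫⁻ t, (∫⁻ v, c v * k v t ∂μ) * f t ∂ν := by
        refine lintegral_congr fun t => ?_
        rw [← lintegral_mul_const (f := fun v => c v * k v t) _ (hc.mul hk.of_uncurry_right)]
        simp only [mul_assoc]

lemma setLIntegral_Ioo_ofReal_sub_pow_div_factorial (n : ℕ) {x t : ℝ} (hxt : x ≤ t) :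
    ∫⁻ s in Ioo x t, ENNReal.ofReal ((t - s) ^ n / n.factorial)
      = ENNReal.ofReal ((t - x) ^ (n + 1) / (n + 1).factorial) := by
  have hint : IntegrableOn (fun s => (t - s) ^ n / n.factorial) (Ioo x t) :=
    (by fun_prop : Continuous fun s : ℝ => (t - s) ^ n / n.factorial).integrableOn_Icc.mono_set
      Ioo_subset_Icc_self
  have hnonneg : ∀ᵐ s ∂volume.restrict (Ioo x t), 0 ≤ (t - s) ^ n / n.factorial := by
    filter_upwards [ae_restrict_mem measurableSet_Ioo] with s hs
    exact div_nonneg (pow_nonneg (sub_nonneg.2 hs.2.le) n) n.factorial.cast_nonneg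
  rw [← ofReal_integral_eq_lintegral_ofReal hint hnonneg, ← integral_Ioc_eq_integral_Ioo,
    ← intervalIntegral.integral_of_le hxt, intervalIntegral.integral_div,
    intervalIntegral.integral_comp_sub_left (fun u => u ^ n), integral_pow, Nat.factorial_succ]
  congr 1
  push_cast
  field_simp
  ring

lemma repeatedTail_succ_eq (f : ℝ → ℝ≥0∞) (hf : Measurable f) (n : ℕ) (x : ℝ) :
    repeatedTail f (n + 1) x
      = ∫⁻ t in Ioi x, ENNReal.ofReal ((t - x) ^ n / n.factorial) * f t := by
  induction n generalizing x with
  | zero => simp [repeatedTail]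
  | succ n ih =>
    have hk : Measurable (Function.uncurry fun s t : ℝ =>
        ENNReal.ofReal ((t - s) ^ n / n.factorial) * f t) := by
      unfold Function.uncurry; fun_prop
    calc repeatedTail f (n + 2) x
        = ∫⁻ s in Ioi x, ∫⁻ t in Ioi s, ENNReal.ofReal ((t - s) ^ n / n.factorial) * f t :=
          lintegral_congr fun s => ih s
      _ = ∫⁻ t in Ioi x, ∫⁻ s in Ioo x t, ENNReal.ofReal ((t - s) ^ n / n.factorial) * f t :=
          setLIntegral_Ioi_setLIntegral_Ioi_swap hk x
      _ = ∫⁻ t in Ioi x, ENNReal.ofReal ((t - x) ^ (n + 1) / (n + 1).factorial) * f t := by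
          refine setLIntegral_congr_fun measurableSet_Ioi fun t ht => ?_
          rw [lintegral_mul_const _ (by fun_prop),
            setLIntegral_Ioo_ofReal_sub_pow_div_factorial n (le_of_lt ht)]

lemma setLIntegral_Ioi_mul_repeatedTail_succ {f : ℝ → ℝ≥0∞} (hf : Measurable f) {φ : ℝ → ℝ≥0∞}
    (hφ : Measurable φ) (m : ℕ) (a : ℝ) :
    ∫⁻ x in Ioi a, φ x * repeatedTail f (m + 1) x
      = ∫⁻ t in Ioi a,
          (∫⁻ x in Ioo a t, φ x * ENNReal.ofReal ((t - x) ^ m / m.factorial)) * f t := by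
  have hk : Measurable (Function.uncurry fun x t : ℝ =>
      φ x * (ENNReal.ofReal ((t - x) ^ m / m.factorial) * f t)) := by
    unfold Function.uncurry; fun_prop
  calc ∫⁻ x in Ioi a, φ x * repeatedTail f (m + 1) x
      = ∫⁻ x in Ioi a, ∫⁻ t in Ioi x,
          φ x * (ENNReal.ofReal ((t - x) ^ m / m.factorial) * f t) := by
        refine lintegral_congr fun x => ?_
        rw [repeatedTail_succ_eq f hf, lintegral_const_mul _ (by fun_prop)]
    _ = ∫⁻ t in Ioi a, ∫⁻ x in Ioo a t,
          φ x * (ENNReal.ofReal ((t - x) ^ m / m.factorial) * f t) :=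
        setLIntegral_Ioi_setLIntegral_Ioi_swap hk a
    _ = _ := by
        refine lintegral_congr fun t => ?_
        rw [← lintegral_mul_const _ (by fun_prop)]
        simp only [mul_assoc]

lemma setLIntegral_Ioo_exp_mul_sub_pow_div_factorial (q : ℝ) (m : ℕ) {t : ℝ} (ht : 0 < t) :
    ∫⁻ x in Ioo 0 t, ENNReal.ofReal (exp (-q * x)) * ENNReal.ofReal ((t - x) ^ m / m.factorial)
      = (m.factorial : ℝ≥0∞)⁻¹ * ∫⁻ v in Ioo 0 1,
          ENNReal.ofReal ((1 - v) ^ m) * ENNReal.ofReal (t ^ (m + 1) * exp (-(q * v) * t)) := by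
  have hIoo : Ioo 0 t = Ioo (t * 0) (t * 1) := by rw [mul_zero, mul_one]
  rw [hIoo, setLIntegral_Ioo_mul_left ht,
    ← lintegral_const_mul' _ _ (by simp [Nat.factorial_ne_zero])]
  refine setLIntegral_congr_fun measurableSet_Ioo fun v hv => ?_
  rw [← ENNReal.ofReal_natCast, ← ENNReal.ofReal_inv_of_pos (by positivity),
    ← ENNReal.ofReal_mul (exp_nonneg _), ← ENNReal.ofReal_mul ht.le,
    ← ENNReal.ofReal_mul (pow_nonneg (sub_nonneg.2 hv.2.le) m),
    ← ENNReal.ofReal_mul (by positivity), show t - t * v = t * (1 - v) by ring, mul_pow,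
    show -q * (t * v) = -(q * v) * t by ring]
  congr 1
  ring

theorem laplace_repeatedTail_general (f : ℝ → ℝ≥0∞) (hf : Measurable f)
    (n : ℕ) (hn : 1 ≤ n) (q : ℝ) :
    (∫⁻ x in Set.Ioi (0 : ℝ), ENNReal.ofReal (Real.exp (-q * x)) * repeatedTail f n x)
      = ((Nat.factorial (n - 1) : ℝ≥0∞))⁻¹ *
        ∫⁻ v in Set.Ioo (0 : ℝ) 1, ENNReal.ofReal ((1 - v) ^ (n - 1)) *
          ∫⁻ t in Set.Ioi (0 : ℝ), ENNReal.ofReal (t ^ n * Real.exp (-(q * v) * t)) * f t := by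
  obtain ⟨m, rfl⟩ : ∃ m, n = m + 1 := ⟨n - 1, by omega⟩
  have hk : Measurable (Function.uncurry fun v t : ℝ =>
      ENNReal.ofReal (t ^ (m + 1) * exp (-(q * v) * t))) := by
    unfold Function.uncurry; fun_prop
  rw [Nat.add_sub_cancel, setLIntegral_Ioi_mul_repeatedTail_succ hf (by fun_prop) m 0,
    lintegral_mul_lintegral_mul_swap (by fun_prop) hk hf,
    ← lintegral_const_mul' _ _ (by simp [Nat.factorial_ne_zero])]
  refine setLIntegral_congr_fun measurableSet_Ioi fun t ht => ?_
  rw [setLIntegral_Ioo_exp_mul_sub_pow_div_factorial q m ht, mul_assoc]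

/-- For measurable `f : [0,∞) → [0,∞]` and every `n ≥ 1`, `q ≥ 0`,
`∫_0^∞ e^{-qx} f_n(x) dx = (1/(n-1)!) ∫_0^1 (1-v)^{n-1} (∫_0^∞ t^n e^{-qvt} f(t) dt) dv`,
both sides valued in `[0,∞]`. -/
theorem laplace_repeatedTail (f : ℝ → ℝ≥0∞) (hf : Measurable f)
    (n : ℕ) (hn : 1 ≤ n) (q : ℝ) (hq : 0 ≤ q) :
    (∫⁻ x in Set.Ioi (0 : ℝ), ENNReal.ofReal (Real.exp (-q * x)) * repeatedTail f n x)
      = ((Nat.factorial (n - 1) : ℝ≥0∞))⁻¹ *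
        ∫⁻ v in Set.Ioo (0 : ℝ) 1, ENNReal.ofReal ((1 - v) ^ (n - 1)) *
          ∫⁻ t in Set.Ioi (0 : ℝ), ENNReal.ofReal (t ^ n * Real.exp (-(q * v) * t)) * f t :=
  laplace_repeatedTail_general f hf n hn q
end

section
/- Let n ≥ 1 be an integer, β ∈ (−1, 0], and let f : (0,∞) → (0,∞) be measurable, locally integrable on (0,1], and regularly varying at 0 with index β, i.e. for every λ > 0, lim_{q→0+} f(λq)/f(q) = λ^β. Then lim_{q→0+} ( ∫_0^1 f(qv)(1−v)^{n−1} dv ) / f(q) = ∫_0^1 v^β (1−v)^{n−1} dv = Γ(n)Γ(β+1)/Γ(n+β+1). -/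
/-!
Write `f x = exp (k (-log x)) * x ^ β`. Regular variation of `f` says that
`k (t + s) - k t → 0` for every `s`; since `k` is measurable, this convergence is uniform for
`s ∈ [1, 2]` (two sets of small measure cannot cover `[0, s]`), and chaining such steps gives the
Potter bound `f (q v) / f q ≤ C v ^ (β - ε)` for small `q` and all `v ∈ (0, 1]`. For `ε < β + 1`
this is an integrable majorant, so dominated convergence yields the limit, whose value is Euler's
beta integral.
-/

open MeasureTheory Set Filter Real
open scoped Topology

theorem tendstoInMeasure_of_tendsto_ae_of_isCountablyGenerated {α ι E : Type*}
    [MeasurableSpace α] [PseudoEMetricSpace E] {μ : Measure α} [IsFiniteMeasure μ]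
    {l : Filter ι} [l.IsCountablyGenerated] {f : ι → α → E} {g : α → E}
    (hf : ∀ i, AEStronglyMeasurable (f i) μ)
    (hfg : ∀ᵐ x ∂μ, Tendsto (fun i => f i x) l (𝓝 (g x))) :
    TendstoInMeasure μ f l g := fun ε hε =>
  tendsto_of_seq_tendsto fun x hx =>
    tendstoInMeasure_of_tendsto_ae (fun n => hf (x n)) (hfg.mono fun _ h => h.comp hx) ε hε

theorem exists_mem_Icc_notMem_and_sub_notMem {A B : Set ℝ} {s : ℝ}
    (h : volume A + volume B < ENNReal.ofReal s) : ∃ u ∈ Icc 0 s, u ∉ A ∧ s - u ∉ B := by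
  by_contra! hcover
  have hsub : Icc 0 s ⊆ A ∪ MeasurableEquiv.subLeft s ⁻¹' B := fun u hu => by
    by_cases huA : u ∈ A
    · exact Or.inl huA
    · exact Or.inr (hcover u hu huA)
  have hpres : MeasurePreserving (MeasurableEquiv.subLeft s) volume volume :=
    Measure.measurePreserving_sub_left volume s
  have := (measure_mono (μ := volume) hsub).trans (measure_union_le _ _)
  rw [Real.volume_Icc, sub_zero, hpres.measure_preimage_equiv] at this
  exact this.not_gt h

section AdditiveForm

variable {k : ℝ → ℝ}

theorem eventually_volume_setOf_le_abs_sub_lt (hk : Measurable k)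
    (hlim : ∀ s, Tendsto (fun t => k (t + s) - k t) atTop (𝓝 0)) (c b : ℝ) {ε : ℝ} (hε : 0 < ε)
    {δ : ENNReal} (hδ : 0 < δ) :
    ∀ᶠ t in atTop, volume {u ∈ Icc 0 b | ε ≤ |k (t + c * u) - k t|} < δ := by
  have hmeas : TendstoInMeasure (volume.restrict (Icc 0 b))
      (fun t u => k (t + c * u) - k t) atTop 0 :=
    tendstoInMeasure_of_tendsto_ae_of_isCountablyGenerated
      (fun t => (by fun_prop : Measurable fun u => k (t + c * u) - k t).aestronglyMeasurable)
      (ae_of_all _ fun u => hlim (c * u))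
  refine ((tendstoInMeasure_iff_dist.1 hmeas ε hε).eventually_lt_const hδ).mono fun t ht => ?_
  rw [Measure.restrict_apply' measurableSet_Icc, inter_comm] at ht
  simp only [Pi.zero_apply, dist_zero_right, Real.norm_eq_abs] at ht
  exact ht

theorem tendstoUniformlyOn_Icc_add_sub (hk : Measurable k)
    (hlim : ∀ s, Tendsto (fun t => k (t + s) - k t) atTop (𝓝 0)) {a b : ℝ} (ha : 0 < a) :
    TendstoUniformlyOn (fun t s => k (t + s) - k t) 0 atTop (Icc a b) := by
  rw [Metric.tendstoUniformlyOn_iff]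
  intro ε hε
  have hsmall (c : ℝ) := eventually_volume_setOf_le_abs_sub_lt hk hlim c b (half_pos hε)
    (ENNReal.ofReal_pos.2 (half_pos ha))
  obtain ⟨t₀, ht₀⟩ := eventually_atTop.1 ((hsmall 1).and (hsmall (-1)))
  filter_upwards [eventually_ge_atTop t₀] with t ht s hs
  -- Some `u ∈ [0, s]` is good both for the step `t → t + u` and the step `t + s → t + u`.
  obtain ⟨u, hu, hfwd, hbwd⟩ := exists_mem_Icc_notMem_and_sub_notMem (s := s)
    (A := {u ∈ Icc 0 b | ε / 2 ≤ |k (t + 1 * u) - k t|})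
    (B := {w ∈ Icc 0 b | ε / 2 ≤ |k (t + s + -1 * w) - k (t + s)|}) (by
      calc _ < ENNReal.ofReal (a / 2) + ENNReal.ofReal (a / 2) :=
            ENNReal.add_lt_add (ht₀ t ht).1 (ht₀ (t + s) (by linarith [hs.1])).2
        _ ≤ ENNReal.ofReal s := by
            rw [← ENNReal.ofReal_add (half_pos ha).le (half_pos ha).le, add_halves]
            exact ENNReal.ofReal_le_ofReal hs.1)
  have hub : u ≤ b := hu.2.trans hs.2
  have h₁ : |k (t + u) - k t| < ε / 2 := by simpa [hu.1, hub] using hfwd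
  have h₂ : |k (t + u) - k (t + s)| < ε / 2 := by
    simpa [hu.2, show s - u ≤ b by linarith [hu.1, hs.2], show t + s + -(s - u) = t + u by ring]
      using hbwd
  calc dist ((0 : ℝ → ℝ) s) (k (t + s) - k t) = |k (t + s) - k t| := by
        rw [Pi.zero_apply, dist_comm, Real.dist_eq, sub_zero]
    _ ≤ |k (t + s) - k (t + u)| + |k (t + u) - k t| := abs_sub_le _ _ _
    _ < ε / 2 + ε / 2 := by rw [abs_sub_comm] at h₂; exact add_lt_add h₂ h₁
    _ = ε := add_halves ε

theorem abs_add_sub_le_of_forall_Icc_one_two {t₀ ε : ℝ}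
    (hstep : ∀ t ≥ t₀, ∀ s ∈ Icc (1 : ℝ) 2, |k (t + s) - k t| ≤ ε) :
    ∀ t ≥ t₀, ∀ s ≥ 0, |k (t + s) - k t| ≤ ε * (s + 3) := by
  have hε : 0 ≤ ε := (abs_nonneg _).trans (hstep t₀ le_rfl 1 ⟨le_rfl, one_le_two⟩)
  -- A step `s ≤ 1` is the difference of the steps `s + 1` and `1`.
  have hshort : ∀ t ≥ t₀, ∀ s ∈ Icc (0 : ℝ) 1, |k (t + s) - k t| ≤ 2 * ε := by
    intro t ht s hs
    have h₁ := hstep (t + s) (by linarith [hs.1]) 1 ⟨le_rfl, one_le_two⟩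
    have h₂ := hstep t ht (s + 1) ⟨by linarith [hs.1], by linarith [hs.2]⟩
    rw [← add_assoc] at h₂
    calc |k (t + s) - k t| ≤ |k (t + s) - k (t + s + 1)| + |k (t + s + 1) - k t| :=
          abs_sub_le _ _ _
      _ ≤ ε + ε := by rw [abs_sub_comm]; exact add_le_add h₁ h₂
      _ = 2 * ε := by ring
  have hnat : ∀ n : ℕ, ∀ t ≥ t₀, ∀ s ∈ Icc (0 : ℝ) n, |k (t + s) - k t| ≤ (n + 2) * ε := by
    intro n
    induction n with
    | zero =>
      intro t ht s hs
      rw [Nat.cast_zero] at hs ⊢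
      linarith [hshort t ht s ⟨hs.1, hs.2.trans zero_le_one⟩]
    | succ n ih =>
      intro t ht s hs
      push_cast at hs ⊢
      rcases le_or_gt s 1 with hs1 | hs1
      · nlinarith [hshort t ht s ⟨hs.1, hs1⟩]
      calc |k (t + s) - k t| ≤ |k (t + 1 + (s - 1)) - k (t + 1)| + |k (t + 1) - k t| := by
            rw [show t + 1 + (s - 1) = t + s by ring]; exact abs_sub_le _ _ _
        _ ≤ (n + 2) * ε + ε :=
            add_le_add (ih _ (by linarith) _ ⟨by linarith, by linarith [hs.2]⟩)
              (hstep t ht 1 ⟨le_rfl, one_le_two⟩)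
        _ = (n + 1 + 2) * ε := by ring
  intro t ht s hs
  calc |k (t + s) - k t| ≤ (⌈s⌉₊ + 2) * ε := hnat _ t ht s ⟨hs, Nat.le_ceil s⟩
    _ ≤ ε * (s + 3) := by nlinarith [Nat.ceil_lt_add_one hs]

end AdditiveForm

def IsRegularlyVaryingAtZero (f : ℝ → ℝ) (β : ℝ) : Prop :=
  ∀ l : ℝ, 0 < l → Tendsto (fun q => f (l * q) / f q) (𝓝[>] 0) (𝓝 (l ^ β))

/-- `log (f x / x ^ β)` in the variable `t = -log x`. -/
noncomputable def logSlowPart (f : ℝ → ℝ) (β t : ℝ) : ℝ := log (f (exp (-t))) + β * t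

theorem measurable_logSlowPart {f : ℝ → ℝ} (hf : Measurable f) (β : ℝ) :
    Measurable (logSlowPart f β) := by
  unfold logSlowPart
  fun_prop

theorem exp_logSlowPart_neg_log_mul_rpow {f : ℝ → ℝ} (β : ℝ) {x : ℝ} (hx : 0 < x)
    (hfx : 0 < f x) : exp (logSlowPart f β (-log x)) * x ^ β = f x := by
  rw [logSlowPart, neg_neg, exp_log hx, rpow_def_of_pos hx, ← exp_add,
    show log (f x) + β * -log x + log x * β = log (f x) by ring, exp_log hfx]

theorem div_eq_exp_logSlowPart_sub_mul_rpow {f : ℝ → ℝ} (β : ℝ) {q v : ℝ} (hq : 0 < q)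
    (hv : 0 < v) (hfq : 0 < f q) (hfqv : 0 < f (q * v)) :
    f (q * v) / f q
      = exp (logSlowPart f β (-log q + -log v) - logSlowPart f β (-log q)) * v ^ β := by
  rw [← exp_logSlowPart_neg_log_mul_rpow β (mul_pos hq hv) hfqv,
    ← exp_logSlowPart_neg_log_mul_rpow β hq hfq, log_mul hq.ne' hv.ne', neg_add, exp_sub,
    mul_rpow hq.le hv.le]
  field_simp

namespace IsRegularlyVaryingAtZero

variable {f : ℝ → ℝ} {β : ℝ}

theorem tendsto_logSlowPart_add_sub (hf : IsRegularlyVaryingAtZero f β)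
    (hpos : ∀ x, 0 < x → 0 < f x) (s : ℝ) :
    Tendsto (fun t => logSlowPart f β (t + s) - logSlowPart f β t) atTop (𝓝 0) := by
  have hexp : Tendsto (fun t => exp (-t)) atTop (𝓝[>] 0) :=
    tendsto_nhdsWithin_of_tendsto_nhds_of_eventually_within _
      (tendsto_exp_atBot.comp tendsto_neg_atTop_atBot) (Eventually.of_forall fun t => exp_pos _)
  have hlim := ((hf _ (exp_pos (-s))).comp hexp).log (rpow_pos_of_pos (exp_pos _) β).ne'
  rw [log_rpow (exp_pos _), log_exp] at hlim
  convert hlim.add_const (β * s) using 1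
  · ext t
    simp only [Function.comp_apply, logSlowPart, neg_add, exp_add,
      log_div (hpos _ (mul_pos (exp_pos _) (exp_pos _))).ne' (hpos _ (exp_pos _)).ne']
    rw [mul_comm (exp (-t))]
    ring
  · rw [mul_neg, neg_add_cancel]

theorem exists_div_le_rpow (hf : IsRegularlyVaryingAtZero f β) (hmeas : Measurable f)
    (hpos : ∀ x, 0 < x → 0 < f x) {ε : ℝ} (hε : 0 < ε) :
    ∃ C q₀ : ℝ, 0 < q₀ ∧ ∀ q ∈ Ioc 0 q₀, ∀ v ∈ Ioc 0 1, f (q * v) / f q ≤ C * v ^ (β - ε) := by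
  obtain ⟨t₀, ht₀⟩ := eventually_atTop.1 <| Metric.tendstoUniformlyOn_iff.1
    (tendstoUniformlyOn_Icc_add_sub (b := 2) (measurable_logSlowPart hmeas β)
      (hf.tendsto_logSlowPart_add_sub hpos) one_pos) ε hε
  have hbound := abs_add_sub_le_of_forall_Icc_one_two (k := logSlowPart f β) (t₀ := t₀)
    fun t ht s hs => by simpa [Real.dist_eq, abs_sub_comm] using (ht₀ t ht s hs).le
  refine ⟨exp (3 * ε), exp (-t₀), exp_pos _, fun q hq v hv => ?_⟩
  have ht : t₀ ≤ -log q := le_neg.2 ((log_le_log hq.1 hq.2).trans_eq (log_exp _))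
  have hs : 0 ≤ -log v := neg_nonneg.2 (log_nonpos hv.1.le hv.2)
  rw [div_eq_exp_logSlowPart_sub_mul_rpow β hq.1 hv.1 (hpos _ hq.1) (hpos _ (mul_pos hq.1 hv.1))]
  calc _ ≤ exp (ε * (-log v + 3)) * v ^ β :=
        mul_le_mul_of_nonneg_right (exp_le_exp.2 ((le_abs_self _).trans (hbound _ ht _ hs)))
          (rpow_nonneg hv.1.le _)
    _ = exp (3 * ε) * v ^ (β - ε) := by
        rw [rpow_sub hv.1, rpow_def_of_pos hv.1 ε,
          show ε * (-log v + 3) = 3 * ε - log v * ε by ring, exp_sub]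
        ring

theorem tendsto_integral_mul_div (hf : IsRegularlyVaryingAtZero f β) (hβ : -1 < β)
    (hmeas : Measurable f) (hpos : ∀ x, 0 < x → 0 < f x) {w : ℝ → ℝ} (hw : Measurable w) {M : ℝ}
    (hM : ∀ v ∈ Ioc (0 : ℝ) 1, |w v| ≤ M) :
    Tendsto (fun q => (∫ v in (0 : ℝ)..1, f (q * v) * w v) / f q) (𝓝[>] 0)
      (𝓝 (∫ v in (0 : ℝ)..1, v ^ β * w v)) := by
  have hγ : -1 < β - (β + 1) / 2 := by linarith
  obtain ⟨C, q₀, hq₀, hpotter⟩ := hf.exists_div_le_rpow hmeas hpos (ε := (β + 1) / 2) (by linarith)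
  simp only [intervalIntegral.integral_of_le zero_le_one, ← integral_div]
  refine tendsto_integral_filter_of_dominated_convergence (fun v => C * v ^ (β - (β + 1) / 2) * M)
    (Eventually.of_forall fun q => ?_) ?_
    (((intervalIntegral.intervalIntegrable_rpow' hγ).1.const_mul C).mul_const M) ?_
  · exact (((hmeas.comp (measurable_const_mul q)).mul hw).div_const _).aestronglyMeasurable
  · filter_upwards [Ioc_mem_nhdsGT hq₀] with q hq
    refine (ae_restrict_iff' measurableSet_Ioc).2 (Eventually.of_forall fun v hv => ?_)
    have hratio := div_pos (hpos _ (mul_pos hq.1 hv.1)) (hpos _ hq.1)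
    rw [norm_eq_abs, mul_div_right_comm, abs_mul, abs_of_pos hratio]
    exact mul_le_mul (hpotter q hq v hv) (hM v hv) (abs_nonneg _)
      (hratio.le.trans (hpotter q hq v hv))
  · refine (ae_restrict_iff' measurableSet_Ioc).2 (Eventually.of_forall fun v hv => ?_)
    refine ((hf v hv.1).mul_const (w v)).congr fun q => ?_
    rw [mul_comm v q, mul_div_right_comm]

end IsRegularlyVaryingAtZero

theorem intervalIntegral_rpow_mul_one_sub_pow {β : ℝ} (hβ : -1 < β) {n : ℕ} (hn : 1 ≤ n) :
    ∫ v in (0 : ℝ)..1, v ^ β * (1 - v) ^ (n - 1)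
      = Gamma n * Gamma (β + 1) / Gamma (n + β + 1) := by
  have hbeta : Complex.betaIntegral ↑(β + 1) ↑(n : ℝ)
      = ↑(∫ v in (0 : ℝ)..1, v ^ β * (1 - v) ^ (n - 1)) := by
    rw [Complex.betaIntegral, ← intervalIntegral.integral_ofReal]
    refine intervalIntegral.integral_congr fun v hv => ?_
    rw [uIcc_of_le zero_le_one] at hv
    have hexp : ((n : ℝ) : ℂ) - 1 = ((n - 1 : ℕ) : ℂ) := by push_cast [Nat.cast_sub hn]; ring
    rw [Complex.ofReal_add, Complex.ofReal_one, add_sub_cancel_right, hexp, Complex.cpow_natCast,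
      ← Complex.ofReal_cpow hv.1]
    push_cast
    ring
  have h := ProbabilityTheory.beta_eq_betaIntegralReal (β + 1) n (by linarith)
    (by exact_mod_cast hn)
  rw [hbeta, Complex.ofReal_re, ProbabilityTheory.beta] at h
  rw [← h, mul_comm, show β + 1 + n = n + β + 1 by ring]

theorem regular_variation_limit_general (n : ℕ) (hn : 1 ≤ n) (β : ℝ) (hβ : β ∈ Set.Ioc (-1 : ℝ) 0)
    (f : ℝ → ℝ) (hmeas : Measurable f) (hpos : ∀ x : ℝ, 0 < x → 0 < f x)
    (hrv : ∀ l : ℝ, 0 < l →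
      Tendsto (fun q => f (l * q) / f q) (𝓝[>] (0 : ℝ)) (𝓝 (l ^ β))) :
    Tendsto (fun q => (∫ v in (0 : ℝ)..1, f (q * v) * (1 - v) ^ (n - 1)) / f q)
        (𝓝[>] (0 : ℝ))
        (𝓝 (∫ v in (0 : ℝ)..1, v ^ β * (1 - v) ^ (n - 1))) ∧
      (∫ v in (0 : ℝ)..1, v ^ β * (1 - v) ^ (n - 1))
        = Real.Gamma n * Real.Gamma (β + 1) / Real.Gamma (n + β + 1) := by
  have hweight : ∀ v ∈ Ioc (0 : ℝ) 1, |(1 - v) ^ (n - 1)| ≤ 1 := fun v hv => by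
    rw [abs_of_nonneg (pow_nonneg (sub_nonneg.2 hv.2) _)]
    exact pow_le_one₀ (sub_nonneg.2 hv.2) (by linarith [hv.1])
  exact ⟨IsRegularlyVaryingAtZero.tendsto_integral_mul_div hrv hβ.1 hmeas hpos (by fun_prop)
    hweight, intervalIntegral_rpow_mul_one_sub_pow hβ.1 hn⟩

/-- If `f : (0,∞) → (0,∞)` is measurable, locally integrable on `(0,1]`, and regularly varying
at `0` with index `β ∈ (-1,0]`, then for every integer `n ≥ 1`,
`∫_0^1 f(qv)(1-v)^{n-1} dv / f(q) → ∫_0^1 v^β (1-v)^{n-1} dv = Γ(n)Γ(β+1)/Γ(n+β+1)`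
as `q → 0+`. -/
theorem regular_variation_limit (n : ℕ) (hn : 1 ≤ n) (β : ℝ) (hβ : β ∈ Set.Ioc (-1 : ℝ) 0)
    (f : ℝ → ℝ) (hmeas : Measurable f) (hpos : ∀ x : ℝ, 0 < x → 0 < f x)
    (hloc : LocallyIntegrableOn f (Set.Ioc (0 : ℝ) 1))
    (hrv : ∀ l : ℝ, 0 < l →
      Tendsto (fun q => f (l * q) / f q) (𝓝[>] (0 : ℝ)) (𝓝 (l ^ β))) :
    Tendsto (fun q => (∫ v in (0 : ℝ)..1, f (q * v) * (1 - v) ^ (n - 1)) / f q)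
        (𝓝[>] (0 : ℝ))
        (𝓝 (∫ v in (0 : ℝ)..1, v ^ β * (1 - v) ^ (n - 1))) ∧
      (∫ v in (0 : ℝ)..1, v ^ β * (1 - v) ^ (n - 1))
        = Real.Gamma n * Real.Gamma (β + 1) / Real.Gamma (n + β + 1) :=
  regular_variation_limit_general n hn β hβ f hmeas hpos hrv
end

section
/- For z ∈ ℂ with Re z > −1 define, for y > 0, u_z(y) := (e^{−zy} − 1 − z(e^{−y} − 1))/(e^y − 1) and v_z(y) := z e^{−y} − u_z(y) = (1 − e^{−zy})/(e^y − 1). Then u_z and v_z extend to bounded continuous functions on [0,∞) (with u_z(0) = 0 and v_z(0) = z). Moreover, there exist constants C_{Re z}, C_{1,Re z}, C_{2,Re z}, ε_{1,Re z}, ε_{2,Re z} > 0, depending only on Re z, such that |v_z(y)| ≤ C_{1,Re z} |z| e^{−ε_{1,Re z} y} for all y ≥ 0, and |v_z(x)| ≤ C_{2,Re z} e^{−ε_{2,Re z} x} for all x ≥ C_{Re z}. -/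
/-!
Since `u_z = z e^{-y} - v_z`, everything reduces to `v_z`. For `y ≠ 0`, `v_z(y)` is the quotient of
the difference quotients at `0` of `1 - e^{-zy}` and `e^y - 1`, whose limits are `z` and `1`; this
makes `v_z` continuous on all of `ℝ`.

With `m = min(1, 1 + Re z) > 0`, the mean value inequality gives
`|1 - e^{-zy}| ≤ |z| y e^{(1-m)y}`, while `e^y - 1 ≥ (m/2) y e^{(1-m/2)y}`; dividing leaves
`|v_z(y)| ≤ (2/m) |z| e^{-my/2}`. For `y ≥ 1` the crude bounds `|1 - e^{-zy}| ≤ 1 + e^{-y Re z}`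
and `e^y - 1 ≥ e^y / 2` give decay at rate `m` with a constant independent of `z`.
-/

open Complex Set

/-- `u_z(y) = (e^{-zy} - 1 - z(e^{-y}-1))/(e^y - 1)` for `y > 0`, extended by `u_z(0) = 0`. -/
noncomputable def uFun (z : ℂ) (y : ℝ) : ℂ :=
  if y = 0 then 0
  else (Complex.exp (-z * y) - 1 - z * (Complex.exp (-(y : ℂ)) - 1)) / (Complex.exp (y : ℂ) - 1)

/-- `v_z(y) = (1 - e^{-zy})/(e^y - 1)` for `y > 0`, extended by `v_z(0) = z`. -/
noncomputable def vFun (z : ℂ) (y : ℝ) : ℂ :=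
  if y = 0 then z else (1 - Complex.exp (-z * y)) / (Complex.exp (y : ℂ) - 1)

theorem Differentiable.continuous_dslope {𝕜 E : Type*} [NontriviallyNormedField 𝕜]
    [NormedAddCommGroup E] [NormedSpace 𝕜 E] {f : 𝕜 → E} (hf : Differentiable 𝕜 f) (a : 𝕜) :
    Continuous (dslope f a) :=
  continuousOn_univ.1 ((continuousOn_dslope Filter.univ_mem).2 ⟨hf.continuous.continuousOn, hf a⟩)

theorem Real.mul_mul_exp_le_exp_sub_one {δ y : ℝ} (hδ : δ ≤ 1) (hy : 0 ≤ y) :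
    δ * y * Real.exp ((1 - δ) * y) ≤ Real.exp y - 1 := by
  have hlin := Real.add_one_le_exp (δ * y)
  have hone : 1 ≤ Real.exp ((1 - δ) * y) := Real.one_le_exp (mul_nonneg (by linarith) hy)
  have hsplit : Real.exp y = Real.exp (δ * y) * Real.exp ((1 - δ) * y) := by
    rw [← Real.exp_add]; ring_nf
  -- `e^y - 1 ≥ e^{(1-δ)y} (e^{δy} - 1) ≥ e^{(1-δ)y} δy`
  nlinarith

theorem Complex.exp_ofReal_sub_one_ne_zero {y : ℝ} (hy : y ≠ 0) :
    Complex.exp (y : ℂ) - 1 ≠ 0 := by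
  rw [sub_ne_zero, ← ofReal_exp, ← ofReal_one, Ne, ofReal_inj, Real.exp_eq_one_iff]
  exact hy

theorem Complex.norm_exp_ofReal_sub_one {y : ℝ} (hy : 0 ≤ y) :
    ‖Complex.exp (y : ℂ) - 1‖ = Real.exp y - 1 := by
  rw [← ofReal_exp, ← ofReal_one, ← ofReal_sub, norm_real, Real.norm_of_nonneg]
  linarith [Real.one_le_exp hy]

theorem Complex.norm_one_sub_exp_neg_mul_le (z : ℂ) {s y : ℝ} (hs : -z.re ≤ s) (hs₀ : 0 ≤ s)
    (hy : 0 ≤ y) : ‖1 - Complex.exp (-z * y)‖ ≤ ‖z‖ * Real.exp (s * y) * y := by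
  have hderiv (t : ℝ) : HasDerivWithinAt (fun t : ℝ => Complex.exp (-z * t))
      (Complex.exp (-z * t) * -z) (Icc 0 y) t := by
    have := ((hasDerivAt_id (t : ℂ)).const_mul (-z)).cexp.comp_ofReal
    simpa using this.hasDerivWithinAt
  have hbound (t : ℝ) (ht : t ∈ Ico 0 y) :
      ‖Complex.exp (-z * t) * -z‖ ≤ ‖z‖ * Real.exp (s * y) := by
    rw [norm_mul, norm_neg, Complex.norm_exp, mul_comm]
    gcongr
    simp only [neg_mul, neg_re, mul_re, ofReal_re, ofReal_im, mul_zero, sub_zero]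
    nlinarith [ht.1, ht.2]
  have := norm_image_sub_le_of_norm_deriv_le_segment' (fun t _ => hderiv t) hbound y
    ⟨hy, le_rfl⟩
  simpa [norm_sub_rev] using this

section

variable (z : ℂ)

theorem hasDerivAt_one_sub_exp_neg_mul (t : ℝ) :
    HasDerivAt (fun t : ℝ => 1 - Complex.exp (-z * t)) (z * Complex.exp (-z * t)) t := by
  have h := (((hasDerivAt_id (t : ℂ)).const_mul (-z)).cexp.comp_ofReal).const_sub 1
  simp only [id, mul_one] at h
  exact h.congr_deriv (by ring)

theorem hasDerivAt_exp_ofReal_sub_one (t : ℝ) :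
    HasDerivAt (fun t : ℝ => Complex.exp (t : ℂ) - 1) (Complex.exp t) t := by
  simpa using ((Complex.hasDerivAt_exp t).comp_ofReal).sub_const 1

theorem vFun_eq_dslope_div_dslope :
    vFun z = fun y => dslope (fun t : ℝ => 1 - Complex.exp (-z * t)) 0 y /
      dslope (fun t : ℝ => Complex.exp (t : ℂ) - 1) 0 y := by
  ext y
  rcases eq_or_ne y 0 with rfl | hy
  · rw [dslope_same, dslope_same, (hasDerivAt_one_sub_exp_neg_mul z 0).deriv,
      (hasDerivAt_exp_ofReal_sub_one 0).deriv]
    simp [vFun]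
  · have hy' : (y : ℂ)⁻¹ ≠ 0 := by exact_mod_cast inv_ne_zero hy
    simp [vFun, hy, dslope_of_ne _ hy, slope_def_module, mul_div_mul_left _ _ hy']

theorem continuous_vFun : Continuous (vFun z) := by
  rw [vFun_eq_dslope_div_dslope]
  refine (Differentiable.continuous_dslope
    (fun t => (hasDerivAt_one_sub_exp_neg_mul z t).differentiableAt) 0).div
    (Differentiable.continuous_dslope
      (fun t => (hasDerivAt_exp_ofReal_sub_one t).differentiableAt) 0) fun y => ?_
  rcases eq_or_ne y 0 with rfl | hy
  · simp [dslope_same, (hasDerivAt_exp_ofReal_sub_one 0).deriv]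
  · rw [dslope_of_ne _ hy, slope_def_module]
    simpa [hy] using Complex.exp_ofReal_sub_one_ne_zero hy

theorem uFun_eq_sub_vFun (y : ℝ) : uFun z y = z * Complex.exp (-(y : ℂ)) - vFun z y := by
  rcases eq_or_ne y 0 with rfl | hy
  · simp [uFun, vFun]
  · have hden := Complex.exp_ofReal_sub_one_ne_zero hy
    have hinv : Complex.exp (-(y : ℂ)) * Complex.exp (y : ℂ) = 1 := by
      rw [← Complex.exp_add, neg_add_cancel, Complex.exp_zero]
    simp only [uFun, vFun, if_neg hy]
    field_simp
    linear_combination -z * hinv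

theorem continuous_uFun : Continuous (uFun z) := by
  rw [funext (uFun_eq_sub_vFun z)]
  exact (by fun_prop : Continuous fun y : ℝ => z * Complex.exp (-(y : ℂ))).sub (continuous_vFun z)

theorem norm_uFun_le {y : ℝ} (hy : 0 ≤ y) : ‖uFun z y‖ ≤ ‖z‖ + ‖vFun z y‖ := by
  rw [uFun_eq_sub_vFun]
  refine (norm_sub_le _ _).trans (add_le_add_left ?_ _)
  rw [norm_mul, Complex.norm_exp]
  simpa using mul_le_of_le_one_right (norm_nonneg z) (Real.exp_le_one_iff.2 (neg_nonpos.2 hy))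

theorem norm_vFun_of_pos {y : ℝ} (hy : 0 < y) :
    ‖vFun z y‖ = ‖1 - Complex.exp (-z * y)‖ / (Real.exp y - 1) := by
  rw [vFun, if_neg hy.ne', norm_div, Complex.norm_exp_ofReal_sub_one hy.le]

variable {z} {m : ℝ}

theorem norm_vFun_le_mul_exp (hm₀ : 0 < m) (hm₁ : m ≤ 1) (hmz : m ≤ 1 + z.re) {y : ℝ}
    (hy : 0 ≤ y) :
    ‖vFun z y‖ ≤ 2 / m * ‖z‖ * Real.exp (-(m / 2) * y) := by
  rcases hy.eq_or_lt with rfl | hy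
  · simpa [vFun] using
      le_mul_of_one_le_left (norm_nonneg z) (by rw [le_div_iff₀ hm₀]; linarith)
  rw [norm_vFun_of_pos z hy, div_le_iff₀ (by linarith [Real.add_one_lt_exp hy.ne'])]
  have hexp : Real.exp ((1 - m) * y) = Real.exp ((1 - m / 2) * y) * Real.exp (-(m / 2) * y) := by
    rw [← Real.exp_add]; ring_nf
  calc ‖1 - Complex.exp (-z * y)‖ ≤ ‖z‖ * Real.exp ((1 - m) * y) * y :=
        Complex.norm_one_sub_exp_neg_mul_le z (by linarith) (by linarith) hy.le
    _ = 2 / m * ‖z‖ * Real.exp (-(m / 2) * y) * (m / 2 * y * Real.exp ((1 - m / 2) * y)) := by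
        rw [hexp]; field_simp
    _ ≤ 2 / m * ‖z‖ * Real.exp (-(m / 2) * y) * (Real.exp y - 1) := by
        gcongr; exact Real.mul_mul_exp_le_exp_sub_one (by linarith) hy.le

theorem norm_vFun_le_exp_of_one_le (hm₁ : m ≤ 1) (hmz : m ≤ 1 + z.re) {x : ℝ} (hx : 1 ≤ x) :
    ‖vFun z x‖ ≤ 4 * Real.exp (-m * x) := by
  have hx₀ : 0 < x := by linarith
  have hnum : ‖1 - Complex.exp (-z * x)‖ ≤ 1 + Real.exp (-z.re * x) :=
    (norm_sub_le _ _).trans (by simp [Complex.norm_exp])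
  have hden : Real.exp x ≤ 2 * (Real.exp x - 1) := by linarith [Real.add_one_le_exp x]
  have h₁ : Real.exp (-x) ≤ Real.exp (-m * x) := Real.exp_le_exp.2 (by nlinarith)
  have h₂ : Real.exp (-(1 + z.re) * x) ≤ Real.exp (-m * x) := Real.exp_le_exp.2 (by nlinarith)
  rw [norm_vFun_of_pos z hx₀, div_le_iff₀ (by linarith [Real.add_one_lt_exp hx₀.ne'])]
  calc ‖1 - Complex.exp (-z * x)‖ ≤ 1 + Real.exp (-z.re * x) := hnum
    _ = (Real.exp (-x) + Real.exp (-(1 + z.re) * x)) * Real.exp x := by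
        rw [add_mul, ← Real.exp_add, ← Real.exp_add, neg_add_cancel, Real.exp_zero]; ring_nf
    _ ≤ 2 * Real.exp (-m * x) * (2 * (Real.exp x - 1)) := by gcongr; linarith
    _ = 4 * Real.exp (-m * x) * (Real.exp x - 1) := by ring

theorem norm_vFun_le (hm₀ : 0 < m) (hm₁ : m ≤ 1) (hmz : m ≤ 1 + z.re) {y : ℝ} (hy : 0 ≤ y) :
    ‖vFun z y‖ ≤ 2 / m * ‖z‖ :=
  (norm_vFun_le_mul_exp hm₀ hm₁ hmz hy).trans <| mul_le_of_le_one_right (by positivity) <|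
    Real.exp_le_one_iff.2 (by nlinarith)

end

/-- For `Re z > -1`, the functions `u_z` and `v_z = z e^{-y} - u_z` are bounded and continuous
on `[0,∞)`, and there are constants depending only on `Re z` such that
`|v_z(y)| ≤ C₁ |z| e^{-ε₁ y}` for all `y ≥ 0` and `|v_z(x)| ≤ C₂ e^{-ε₂ x}` for `x ≥ C`. -/
theorem uFun_vFun_bounds :
    (∀ z : ℂ, -1 < z.re →
      (∀ y : ℝ, 0 < y → vFun z y = z * Complex.exp (-(y : ℂ)) - uFun z y) ∧
      ContinuousOn (uFun z) (Set.Ici (0 : ℝ)) ∧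
      ContinuousOn (vFun z) (Set.Ici (0 : ℝ)) ∧
      (∃ M : ℝ, ∀ y ∈ Set.Ici (0 : ℝ), ‖uFun z y‖ ≤ M) ∧
      (∃ M : ℝ, ∀ y ∈ Set.Ici (0 : ℝ), ‖vFun z y‖ ≤ M)) ∧
    (∀ r : ℝ, -1 < r →
      ∃ C C₁ C₂ ε₁ ε₂ : ℝ, 0 < C ∧ 0 < C₁ ∧ 0 < C₂ ∧ 0 < ε₁ ∧ 0 < ε₂ ∧
        ∀ z : ℂ, z.re = r →
          (∀ y : ℝ, 0 ≤ y → ‖vFun z y‖ ≤ C₁ * ‖z‖ * Real.exp (-ε₁ * y)) ∧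
          (∀ x : ℝ, C ≤ x → ‖vFun z x‖ ≤ C₂ * Real.exp (-ε₂ * x))) := by
  refine ⟨fun z hz => ?_, fun r hr => ?_⟩
  · obtain ⟨m, hm₀, hm₁, hmz⟩ : ∃ m : ℝ, 0 < m ∧ m ≤ 1 ∧ m ≤ 1 + z.re :=
      ⟨min 1 (1 + z.re), lt_min one_pos (by linarith), min_le_left _ _, min_le_right _ _⟩
    have hv (y : ℝ) (hy : y ∈ Ici 0) := norm_vFun_le hm₀ hm₁ hmz hy
    refine ⟨fun y _ => by rw [uFun_eq_sub_vFun]; ring, (continuous_uFun z).continuousOn,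
      (continuous_vFun z).continuousOn, ⟨‖z‖ + 2 / m * ‖z‖, fun y hy => ?_⟩, ⟨_, hv⟩⟩
    exact (norm_uFun_le z hy).trans (by gcongr; exact hv y hy)
  · obtain ⟨m, hm₀, hm₁, hmr⟩ : ∃ m : ℝ, 0 < m ∧ m ≤ 1 ∧ m ≤ 1 + r :=
      ⟨min 1 (1 + r), lt_min one_pos (by linarith), min_le_left _ _, min_le_right _ _⟩
    refine ⟨1, 2 / m, 4, m / 2, m, one_pos, by positivity, by norm_num, by positivity, hm₀,
      fun z hz => ⟨fun y => norm_vFun_le_mul_exp hm₀ hm₁ (hz ▸ hmr),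
        fun x => norm_vFun_le_exp_of_one_le hm₁ (hz ▸ hmr)⟩⟩
end
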